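/- Fix m ∈ ℕ₀, τ ∈ ℍ and w ∈ ℂ with 0 < |q| < |q_w| < 1. As a function of z, the meromorphic continuation of P̃_{m+1}(w,z,τ) has a simple pole at each point z = λτ + μ with λ, μ ∈ ℤ, with residue equal to λ^m q_w^{−λ} / (m! · 2πi), and it has no other poles in z. -/

import Mathlib

open Complex Filter Topology

/-- `e(x) = e^{2πix}`; thus `q = eF τ`, `q_w = eF w`, `q_z = eF z`. -/
noncomputable def eF (x : ℂ) : ℂ := Complex.exp (2 * (Real.pi : ℂ) * Complex.I * x)

/-! Since `|q| < |q_w| < 1`, the series converges locally uniformly on all of `ℂ` once the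
finitely many terms with a nearby pole are removed: for large `n > 0` the denominator is close
to `1`, and for large `-n` the `n`-th term has size `≍ |n|^m |q/q_w|^{|n|}`. Hence the series
itself is meromorphic on `ℂ`, and by the identity theorem `F` is the series times
`(-1)^{m+1}/m!`. Near `z₀ = λτ + μ` exactly one denominator vanishes, the one with `n = -λ`,
and it does so simply, with derivative `-2πi`; all other terms add up to an analytic function,
which gives the residue. -/

section NormOneSub

variable {R : Type*} [SeminormedRing R] [NormOneClass R]

lemma half_le_norm_one_sub {X : R} (h : ‖X‖ ≤ 1 / 2) : 1 / 2 ≤ ‖1 - X‖ := by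
  have := norm_sub_norm_le (1 : R) X
  rw [norm_one] at this
  linarith

lemma half_norm_le_norm_one_sub {X : R} (h : 2 ≤ ‖X‖) : ‖X‖ / 2 ≤ ‖1 - X‖ := by
  have := norm_sub_norm_le X 1
  rw [norm_one, norm_sub_rev] at this
  linarith

end NormOneSub

lemma tendsto_sub_mul_div_of_hasDerivAt {𝕜 : Type*} [NontriviallyNormedField 𝕜] {g : 𝕜 → 𝕜}
    {d z₀ : 𝕜} (c : 𝕜) (hg : HasDerivAt g d z₀) (hg₀ : g z₀ = 0) (hd : d ≠ 0) :
    Tendsto (fun z => (z - z₀) * (c / g z)) (𝓝[≠] z₀) (𝓝 (c / d)) := by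
  have hslope : Tendsto (fun z => g z / (z - z₀)) (𝓝[≠] z₀) (𝓝 d) := by
    refine (hasDerivAt_iff_tendsto_slope.mp hg).congr fun z => ?_
    rw [slope_def_field, hg₀, sub_zero]
  rw [div_eq_mul_inv c d]
  refine ((hslope.inv₀ hd).const_mul c).congr fun z => ?_
  rw [inv_div]
  ring

lemma summable_natAbs_pow_mul_pow_natAbs (m : ℕ) {r : ℝ} (hr₀ : 0 ≤ r) (hr₁ : r < 1) :
    Summable fun n : ℤ => (n.natAbs : ℝ) ^ m * r ^ n.natAbs := by
  have h := summable_pow_mul_geometric_of_norm_lt_one m (r := r)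
    (by rwa [Real.norm_of_nonneg hr₀])
  exact .of_nat_of_neg (by simpa using h) (by simpa using h)

lemma exists_analyticAt_tsum_eventuallyEq_add {ι : Type*} [DecidableEq ι] {f : ι → ℂ → ℂ}
    {u : ι → ℝ} {U : Set ℂ} {z₀ : ℂ} {s : Finset ι} {i₀ : ι} (hi₀ : i₀ ∈ s)
    (hU : IsOpen U) (hz₀ : z₀ ∈ U) (hu : Summable u)
    (hdiff : ∀ i ∉ s, DifferentiableOn ℂ (f i) U) (hle : ∀ i ∉ s, ∀ z ∈ U, ‖f i z‖ ≤ u i)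
    (han : ∀ i ∈ s, i ≠ i₀ → AnalyticAt ℂ (f i) z₀) :
    ∃ T : ℂ → ℂ, AnalyticAt ℂ T z₀ ∧
      (fun z => ∑' i, f i z) =ᶠ[𝓝 z₀] fun z => f i₀ z + T z := by
  let tail z := ∑' i : {i // i ∉ s}, f i z
  have htail : AnalyticAt ℂ tail z₀ :=
    (differentiableOn_tsum_of_summable_norm (F := fun (i : {i // i ∉ s}) => f i)
      (hu.subtype _) (fun i => hdiff i i.2) hU
      (fun i z hz => hle i i.2 z hz)).analyticAt (hU.mem_nhds hz₀)
  refine ⟨fun z => ∑ i ∈ s.erase i₀, f i z + tail z,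
    (Finset.analyticAt_fun_sum _ fun i hi => han i (Finset.mem_of_mem_erase hi)
      (Finset.ne_of_mem_erase hi)).add htail, ?_⟩
  filter_upwards [hU.mem_nhds hz₀] with z hz
  have hsum : Summable (f · z) := (Finset.summable_compl_iff s).mp <|
    (hu.subtype _).of_norm_bounded fun i => hle i i.2 z hz
  rw [← hsum.sum_add_tsum_subtype_compl s, ← Finset.add_sum_erase s _ hi₀, add_assoc]

lemma eventuallyEq_nhdsNE_of_meromorphic {𝕜 : Type*} [RCLike 𝕜] {E : Type*}
    [NormedAddCommGroup E] [NormedSpace 𝕜 E] {f g : 𝕜 → E} (hf : Meromorphic f)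
    (hg : Meromorphic g) {x₀ : 𝕜} (h : f =ᶠ[𝓝[≠] x₀] g) (x : 𝕜) : f =ᶠ[𝓝[≠] x] g := by
  have hfg : Meromorphic (f - g) := fun x => (hf x).sub (hg x)
  have htop : ∀ x, meromorphicOrderAt (f - g) x = ⊤ := by
    by_contra! hne
    refine (hfg.exists_meromorphicOrderAt_ne_top_iff_forall.mp hne x₀) ?_
    exact meromorphicOrderAt_eq_top_iff.mpr (h.mono fun z hz => sub_eq_zero.mpr hz)
  exact (meromorphicOrderAt_eq_top_iff.mp (htop x)).mono fun z hz => sub_eq_zero.mp hz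

lemma eq_of_mul_zpow_eq_one {𝕜 : Type*} [NormedField 𝕜] {x q : 𝕜} (hq₀ : q ≠ 0)
    (hq₁ : ‖q‖ < 1) {a b : ℤ} (ha : x * q ^ a = 1) (hb : x * q ^ b = 1) : a = b := by
  have hx : x ≠ 0 := left_ne_zero_of_mul_eq_one ha
  have hab : ‖q‖ ^ a = ‖q‖ ^ b := by
    rw [← norm_zpow, ← norm_zpow, mul_left_cancel₀ hx (ha.trans hb.symm)]
  exact zpow_right_injective₀ (norm_pos_iff.mpr hq₀) hq₁.ne hab

lemma exists_summable_bound_div_one_sub_mul_zpow (m : ℕ) {q p : ℂ} (hq : q ≠ 0)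
    (hqp : ‖q‖ < ‖p‖) (hp : ‖p‖ < 1) {A B : ℝ} (hA : 0 < A) :
    ∃ (N : ℕ) (u : ℤ → ℝ), Summable u ∧ ∀ n : ℤ, N ≤ n.natAbs → ∀ x : ℂ, A ≤ ‖x‖ → ‖x‖ ≤ B →
      x * q ^ n ≠ 1 ∧ ‖(n : ℂ) ^ m * p ^ n / (1 - x * q ^ n)‖ ≤ u n := by
  have ha : 0 < ‖q‖ := norm_pos_iff.mpr hq
  have hb : 0 < ‖p‖ := ha.trans hqp
  obtain ⟨N, hN⟩ : ∃ N : ℕ, ∀ k ≥ N, B * ‖q‖ ^ k ≤ 1 / 2 ∧ ‖q‖ ^ k ≤ A / 2 := by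
    have ht := tendsto_pow_atTop_nhds_zero_of_lt_one ha.le (hqp.trans hp)
    have hB := (ht.const_mul B).eventually (ge_mem_nhds (by norm_num : B * 0 < 1 / 2))
    have hA := ht.eventually (ge_mem_nhds (by positivity : (0 : ℝ) < A / 2))
    exact eventually_atTop.mp (hB.and hA)
  refine ⟨N, fun n => 2 * ((n.natAbs : ℝ) ^ m * ‖p‖ ^ n.natAbs) +
    2 / A * ((n.natAbs : ℝ) ^ m * (‖q‖ / ‖p‖) ^ n.natAbs), ?_, ?_⟩
  · exact ((summable_natAbs_pow_mul_pow_natAbs m hb.le hp).mul_left 2).add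
      ((summable_natAbs_pow_mul_pow_natAbs m (by positivity) ((div_lt_one hb).mpr hqp)).mul_left _)
  intro n hn x hxA hxB
  obtain ⟨k, rfl | rfl⟩ := Int.eq_nat_or_neg n
  · have hk := hN k (by simpa using hn)
    have hX : ‖x * q ^ k‖ ≤ 1 / 2 := by
      rw [norm_mul, norm_pow]
      nlinarith [pow_pos ha k]
    have hden := half_le_norm_one_sub hX
    refine ⟨by simpa using (sub_ne_zero.mp (norm_pos_iff.mp (by linarith))).symm, ?_⟩
    calc ‖((k : ℤ) : ℂ) ^ m * p ^ (k : ℤ) / (1 - x * q ^ (k : ℤ))‖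
        = (k : ℝ) ^ m * ‖p‖ ^ k / ‖1 - x * q ^ k‖ := by simp [div_eq_mul_inv]
      _ ≤ (k : ℝ) ^ m * ‖p‖ ^ k / (1 / 2) := by gcongr
      _ = 2 * ((k : ℝ) ^ m * ‖p‖ ^ k) := by ring
      _ ≤ _ := by
        simp only [Int.natAbs_natCast]
        exact le_add_of_nonneg_right (by positivity)
  · have hk := hN k (by simpa using hn)
    have hX : 2 ≤ ‖x * (q ^ k)⁻¹‖ := by
      rw [norm_mul, norm_inv, norm_pow, ← div_eq_mul_inv, le_div_iff₀ (pow_pos ha k)]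
      linarith
    have hden := half_norm_le_norm_one_sub hX
    refine ⟨by simpa using (sub_ne_zero.mp (norm_pos_iff.mp (by linarith))).symm, ?_⟩
    have hx : 0 < ‖x‖ := hA.trans_le hxA
    calc ‖((-(k : ℤ) : ℤ) : ℂ) ^ m * p ^ (-(k : ℤ)) / (1 - x * q ^ (-(k : ℤ)))‖
        = (k : ℝ) ^ m / ‖p‖ ^ k / ‖1 - x * (q ^ k)⁻¹‖ := by simp [div_eq_mul_inv]
      _ ≤ (k : ℝ) ^ m / ‖p‖ ^ k / (‖x * (q ^ k)⁻¹‖ / 2) := by gcongr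
      _ = 2 / ‖x‖ * ((k : ℝ) ^ m * (‖q‖ / ‖p‖) ^ k) := by
        rw [norm_mul, norm_inv, norm_pow, div_pow]
        field_simp
      _ ≤ 2 / A * ((k : ℝ) ^ m * (‖q‖ / ‖p‖) ^ k) := by gcongr
      _ ≤ _ := by
        simp only [Int.natAbs_neg, Int.natAbs_natCast]
        exact le_add_of_nonneg_left (by positivity)

lemma eF_ne_zero (x : ℂ) : eF x ≠ 0 := Complex.exp_ne_zero _

lemma eF_zero : eF 0 = 1 := by simp [eF]

lemma eF_add (x y : ℂ) : eF (x + y) = eF x * eF y := by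
  rw [eF, eF, eF, ← Complex.exp_add]
  ring_nf

lemma eF_zpow (x : ℂ) (n : ℤ) : eF x ^ n = eF (n * x) := by
  rw [eF, eF, ← Complex.exp_int_mul]
  ring_nf

lemma eF_eq_one_iff {x : ℂ} : eF x = 1 ↔ ∃ k : ℤ, x = k := by
  rw [eF, Complex.exp_eq_one_iff]
  refine exists_congr fun k => ⟨fun h => ?_, fun h => by rw [h]; ring⟩
  exact mul_left_cancel₀ Complex.two_pi_I_ne_zero (by rw [h]; ring)

lemma norm_eF (x : ℂ) : ‖eF x‖ = Real.exp (-(2 * Real.pi * x.im)) := by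
  rw [eF, Complex.norm_exp]
  simp [Complex.mul_re]

lemma norm_eF_lt_norm_eF_iff {x y : ℂ} : ‖eF x‖ < ‖eF y‖ ↔ y.im < x.im := by
  rw [norm_eF, norm_eF, Real.exp_lt_exp, neg_lt_neg_iff]
  exact mul_lt_mul_iff_right₀ Real.two_pi_pos

lemma hasDerivAt_eF (z : ℂ) : HasDerivAt eF (2 * Real.pi * Complex.I * eF z) z := by
  have h := ((hasDerivAt_id z).const_mul (2 * Real.pi * Complex.I)).cexp
  rw [mul_one] at h
  exact h.congr_deriv (mul_comm _ _)

lemma differentiable_eF : Differentiable ℂ eF := fun z => (hasDerivAt_eF z).differentiableAt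

@[fun_prop]
lemma analyticAt_eF (z : ℂ) : AnalyticAt ℂ eF z := differentiable_eF.analyticAt z

lemma eventually_norm_eF_lt_norm_eF_and_lt_one {τ : ℂ} (hτ : 0 < τ.im) :
    ∀ᶠ z in 𝓝 (τ / 2), ‖eF τ‖ < ‖eF z‖ ∧ ‖eF z‖ < 1 := by
  have hc : Continuous fun z => ‖eF z‖ := differentiable_eF.continuous.norm
  refine (continuousAt_const.eventually_lt hc.continuousAt ?_).and
    (hc.continuousAt.eventually_lt continuousAt_const ?_)
  · exact norm_eF_lt_norm_eF_iff.mpr (by simpa using hτ)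
  · rw [← norm_one (α := ℂ), ← eF_zero]
    exact norm_eF_lt_norm_eF_iff.mpr (by simpa using hτ)

lemma eF_mul_eF_zpow_eq_one_iff {z τ : ℂ} {n : ℤ} :
    eF z * eF τ ^ n = 1 ↔ ∃ k : ℤ, z = k - n * τ := by
  rw [eF_zpow, ← eF_add, eF_eq_one_iff]
  exact exists_congr fun k => ⟨fun h => by linear_combination h, fun h => by rw [h]; ring⟩

/-- The `n`-th summand of `P̃_{m+1}(w, z, τ)` without the factor `(-1)^{m+1}/m!`. -/
noncomputable def ptildeTerm (m : ℕ) (τ w : ℂ) (n : ℤ) (z : ℂ) : ℂ :=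
  (n : ℂ) ^ m * eF w ^ n / (1 - eF z * eF τ ^ n)

noncomputable def ptildeSeries (m : ℕ) (τ w z : ℂ) : ℂ := ∑' n : ℤ, ptildeTerm m τ w n z

section Ptilde

variable (m : ℕ) {τ w : ℂ}

lemma meromorphicAt_ptildeTerm (n : ℤ) (z : ℂ) : MeromorphicAt (ptildeTerm m τ w n) z := by
  unfold ptildeTerm
  fun_prop

lemma analyticAt_ptildeTerm {n : ℤ} {z : ℂ} (h : eF z * eF τ ^ n ≠ 1) :
    AnalyticAt ℂ (ptildeTerm m τ w n) z :=
  analyticAt_const.div (by fun_prop) (sub_ne_zero.mpr h.symm)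

lemma exists_analyticAt_ptildeSeries_eventuallyEq (hqw : ‖eF τ‖ < ‖eF w‖) (hw1 : ‖eF w‖ < 1)
    {z₀ : ℂ} {n₀ : ℤ} (h : ∀ n ≠ n₀, eF z₀ * eF τ ^ n ≠ 1) :
    ∃ T : ℂ → ℂ, AnalyticAt ℂ T z₀ ∧
      ptildeSeries m τ w =ᶠ[𝓝 z₀] fun z => ptildeTerm m τ w n₀ z + T z := by
  set r := ‖eF z₀‖
  have hr : 0 < r := norm_pos_iff.mpr (eF_ne_zero z₀)
  obtain ⟨N, u, hu, hbound⟩ := exists_summable_bound_div_one_sub_mul_zpow m (eF_ne_zero τ) hqw hw1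
    (A := r / 2) (B := 2 * r) (by positivity)
  have hc : Continuous fun z => ‖eF z‖ := differentiable_eF.continuous.norm
  let U := {z | r / 2 < ‖eF z‖ ∧ ‖eF z‖ < 2 * r}
  have hU : IsOpen U := (isOpen_lt continuous_const hc).inter (isOpen_lt hc continuous_const)
  have hz₀ : z₀ ∈ U := ⟨by linarith, by linarith⟩
  let s := insert n₀ (Finset.Ioo (-(N : ℤ)) N)
  have hlarge : ∀ n ∉ s, N ≤ n.natAbs := by
    intro n hn
    simp only [s, Finset.mem_insert, Finset.mem_Ioo, not_or] at hn
    omega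
  refine exists_analyticAt_tsum_eventuallyEq_add (Finset.mem_insert_self _ _) hU hz₀ hu
    (fun n hn z hz => ?_) (fun n hn z hz => (hbound n (hlarge n hn) _ hz.1.le hz.2.le).2)
    (fun n _ hne => analyticAt_ptildeTerm m (h n hne))
  exact (analyticAt_ptildeTerm m (hbound n (hlarge n hn) _ hz.1.le hz.2.le).1).differentiableAt
    |>.differentiableWithinAt

lemma meromorphic_ptildeSeries (hqw : ‖eF τ‖ < ‖eF w‖) (hw1 : ‖eF w‖ < 1) :
    Meromorphic (ptildeSeries m τ w) := by
  intro z₀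
  obtain ⟨n₀, h⟩ : ∃ n₀ : ℤ, ∀ n ≠ n₀, eF z₀ * eF τ ^ n ≠ 1 := by
    by_cases hpole : ∃ n₀ : ℤ, eF z₀ * eF τ ^ n₀ = 1
    · obtain ⟨n₀, hn₀⟩ := hpole
      exact ⟨n₀, fun n hne hn =>
        hne (eq_of_mul_zpow_eq_one (eF_ne_zero τ) (hqw.trans hw1) hn hn₀)⟩
    · simp only [not_exists] at hpole
      exact ⟨0, fun n _ => hpole n⟩
  obtain ⟨T, hT, hEq⟩ := exists_analyticAt_ptildeSeries_eventuallyEq m hqw hw1 h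
  exact ((meromorphicAt_ptildeTerm m n₀ z₀).add hT.meromorphicAt).congr
    (hEq.filter_mono nhdsWithin_le_nhds).symm

lemma analyticAt_ptildeSeries (hqw : ‖eF τ‖ < ‖eF w‖) (hw1 : ‖eF w‖ < 1)
    {z₀ : ℂ} (hz₀ : ∀ l mu : ℤ, z₀ ≠ l * τ + mu) :
    AnalyticAt ℂ (ptildeSeries m τ w) z₀ := by
  have h : ∀ n : ℤ, eF z₀ * eF τ ^ n ≠ 1 := fun n hn => by
    obtain ⟨k, hk⟩ := eF_mul_eF_zpow_eq_one_iff.mp hn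
    exact hz₀ (-n) k (by push_cast; linear_combination hk)
  obtain ⟨T, hT, hEq⟩ := exists_analyticAt_ptildeSeries_eventuallyEq m hqw hw1 (n₀ := 0)
    fun n _ => h n
  exact ((analyticAt_ptildeTerm m (h 0)).add hT).congr hEq.symm

lemma tendsto_sub_mul_ptildeSeries (hqw : ‖eF τ‖ < ‖eF w‖) (hw1 : ‖eF w‖ < 1)
    (l mu : ℤ) :
    Tendsto (fun z => (z - (l * τ + mu)) * ptildeSeries m τ w z) (𝓝[≠] (l * τ + mu))
      (𝓝 (((-l : ℤ) : ℂ) ^ m * eF w ^ (-l) / -(2 * Real.pi * Complex.I))) := by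
  set z₀ : ℂ := l * τ + mu
  have hpole : eF z₀ * eF τ ^ (-l) = 1 :=
    eF_mul_eF_zpow_eq_one_iff.mpr ⟨mu, by push_cast; ring⟩
  obtain ⟨T, hT, hEq⟩ := exists_analyticAt_ptildeSeries_eventuallyEq m hqw hw1 (n₀ := -l)
    fun n hne hn => hne (eq_of_mul_zpow_eq_one (eF_ne_zero τ) (hqw.trans hw1) hn hpole)
  have hden : HasDerivAt (fun z => 1 - eF z * eF τ ^ (-l)) (-(2 * Real.pi * Complex.I)) z₀ := by
    refine (((hasDerivAt_eF z₀).mul_const (eF τ ^ (-l))).const_sub 1).congr_deriv ?_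
    rw [mul_assoc, hpole, mul_one]
  have hterm : Tendsto (fun z => (z - z₀) * ptildeTerm m τ w (-l) z) (𝓝[≠] z₀)
      (𝓝 (((-l : ℤ) : ℂ) ^ m * eF w ^ (-l) / -(2 * Real.pi * Complex.I))) :=
    tendsto_sub_mul_div_of_hasDerivAt _ hden (by rw [hpole, sub_self])
      (neg_ne_zero.mpr Complex.two_pi_I_ne_zero)
  have hT₀ : Tendsto (fun z => (z - z₀) * T z) (𝓝[≠] z₀) (𝓝 0) := by
    have hc : ContinuousAt (fun z => (z - z₀) * T z) z₀ := by
      have := hT.continuousAt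
      fun_prop
    simpa using hc.tendsto.mono_left nhdsWithin_le_nhds
  simpa using (hterm.add hT₀).congr' <|
    (hEq.filter_mono nhdsWithin_le_nhds).mono fun z hz => by rw [hz, mul_add]

end Ptilde

/-- Fix `m ∈ ℕ₀`, `τ ∈ ℍ` and `w` with `0 < |q| < |q_w| < 1`.  Any meromorphic
function `F` on `ℂ` agreeing with the series
`P̃_{m+1}(w,z,τ) := ((−1)^{m+1}/m!) ∑_{n∈ℤ} n^m q_w^n/(1 − q_z q^n)` (as a function of `z`)
on its domain of convergence has no poles away from `z ∈ ℤτ + ℤ` (the limit of `F z` exists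
there), and at each `z = λτ + μ` it has at worst a simple pole with residue
`λ^m q_w^{−λ}/(m!·2πi)` (for `λ = 0`, `m ≥ 1` this residue is `0`, i.e. `F` is regular). -/
theorem Ptilde_poles_and_residues (m : ℕ) (τ w : ℂ) (hτ : 0 < τ.im)
    (hqw : ‖eF τ‖ < ‖eF w‖) (hw1 : ‖eF w‖ < 1)
    (F : ℂ → ℂ) (hF : MeromorphicOn F (Set.univ : Set ℂ))
    (hFagree : ∀ z : ℂ,
      ‖eF τ‖ < ‖eF z‖ → ‖eF z‖ < 1 →
      F z = ((-1 : ℂ) ^ (m + 1) / (m.factorial : ℂ)) *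
        ∑' n : ℤ, (n : ℂ) ^ m * eF w ^ n / (1 - eF z * eF τ ^ n)) :
    (∀ z₀ : ℂ, (∀ l mu : ℤ, z₀ ≠ (l : ℂ) * τ + (mu : ℂ)) →
      ∃ c : ℂ, Filter.Tendsto F (𝓝[≠] z₀) (𝓝 c)) ∧
    (∀ l mu : ℤ,
      Filter.Tendsto (fun z : ℂ => (z - ((l : ℂ) * τ + (mu : ℂ))) * F z)
        (𝓝[≠] ((l : ℂ) * τ + (mu : ℂ)))
        (𝓝 ((l : ℂ) ^ m * eF w ^ (-l) /
          ((m.factorial : ℂ) * (2 * (Real.pi : ℂ) * Complex.I))))) := by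
  set c : ℂ := (-1) ^ (m + 1) / (m.factorial : ℂ)
  have hFG : ∀ z₀, F =ᶠ[𝓝[≠] z₀] fun z => c * ptildeSeries m τ w z :=
    eventuallyEq_nhdsNE_of_meromorphic (meromorphicOn_univ.mp hF)
      (fun z => (MeromorphicAt.const c z).mul (meromorphic_ptildeSeries m hqw hw1 z))
      (((eventually_norm_eF_lt_norm_eF_and_lt_one hτ).filter_mono nhdsWithin_le_nhds).mono
        fun z hz => hFagree z hz.1 hz.2)
  refine ⟨fun z₀ hz₀ => ⟨c * ptildeSeries m τ w z₀, ?_⟩, fun l mu => ?_⟩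
  · exact (((analyticAt_ptildeSeries m hqw hw1 hz₀).continuousAt.const_mul c).tendsto.mono_left
      nhdsWithin_le_nhds).congr' (hFG z₀).symm
  · have hsign : (-1 : ℂ) ^ (m + 1) * (-1) ^ m = -1 := by
      rw [← pow_add]
      exact Odd.neg_one_pow ⟨m, by ring⟩
    have hval : c * (((-l : ℤ) : ℂ) ^ m * eF w ^ (-l) / -(2 * Real.pi * Complex.I)) =
        (l : ℂ) ^ m * eF w ^ (-l) / ((m.factorial : ℂ) * (2 * Real.pi * Complex.I)) := by
      rw [Int.cast_neg, neg_pow (l : ℂ), div_mul_div_comm, mul_neg, div_neg, ← neg_div]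
      congr 1
      linear_combination (-(l : ℂ) ^ m * eF w ^ (-l)) * hsign
    rw [← hval]
    exact ((tendsto_sub_mul_ptildeSeries m hqw hw1 l mu).const_mul c).congr' <|
      (hFG _).mono fun z hz => by simp only [hz, mul_left_comm]
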